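/- arXiv:2301.00851 — 3 statements merged into one kernel-verified Lean document; each statement's English description precedes it below -/
import Mathlib

section
/- For parameters β > 0 and Ĵ > 0 with βĴ > 1, the function W_β(S) = -(1/β)√(1-S²) - (1/2)Ĵ S² + Ĵ/2 + 1/(2β²Ĵ) on [-1,1] is nonnegative and vanishes exactly at S = ±𝔰 where 𝔰 = √(1 - β⁻²Ĵ⁻²). -/
open Real Set

noncomputable def Wbeta (β J S : ℝ) : ℝ :=
  -(1/β) * Real.sqrt (1 - S^2) - (1/2) * J * S^2 - (-(J/2) - 1/(2*β^2*J))

noncomputable def sfrak (β J : ℝ) : ℝ := Real.sqrt (1 - 1/(β^2*J^2))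

theorem double_well_nonneg_and_zeros (β J : ℝ) (hβ : 0 < β) (hJ : 0 < J) (h : 1 < β * J) :
    (∀ S ∈ Set.Icc (-1:ℝ) 1, 0 ≤ Wbeta β J S) ∧
    (∀ S ∈ Set.Icc (-1:ℝ) 1, (Wbeta β J S = 0 ↔ S = sfrak β J ∨ S = -sfrak β J)) := by
  have hβJ : 0 < β * J := mul_pos hβ hJ
  have key : ∀ S ∈ Set.Icc (-1:ℝ) 1,
      Wbeta β J S = J/2 * (Real.sqrt (1 - S^2) - 1/(β*J))^2 := by
    intro S hS
    obtain ⟨h1, h2⟩ := hS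
    have hS2 : (0:ℝ) ≤ 1 - S^2 := by nlinarith
    have hu : (Real.sqrt (1 - S^2))^2 = 1 - S^2 := Real.sq_sqrt hS2
    unfold Wbeta
    field_simp
    linear_combination (-β^2*J^2) * hu
  constructor
  · intro S hS
    rw [key S hS]
    positivity
  · intro S hS
    obtain ⟨h1, h2⟩ := hS
    have hS2 : (0:ℝ) ≤ 1 - S^2 := by nlinarith
    have hu0 : 0 ≤ Real.sqrt (1 - S^2) := Real.sqrt_nonneg _
    have hu : (Real.sqrt (1 - S^2))^2 = 1 - S^2 := Real.sq_sqrt hS2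
    have hc : (0:ℝ) < 1/(β*J) := by positivity
    have hs2 : (0:ℝ) ≤ 1 - 1/(β^2*J^2) := by
      have : 1/(β^2*J^2) ≤ 1 := by
        rw [div_le_one (by positivity)]
        nlinarith
      linarith
    have hsq : (sfrak β J)^2 = 1 - 1/(β^2*J^2) := Real.sq_sqrt hs2
    rw [key S ⟨h1, h2⟩]
    constructor
    · intro hW
      have hJ2 : (0:ℝ) < J/2 := by positivity
      have hsq0 : (Real.sqrt (1 - S^2) - 1/(β*J))^2 = 0 := by
        rcases mul_eq_zero.mp hW with h' | h'
        · exact absurd h' hJ2.ne'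
        · exact h'
      have heq : Real.sqrt (1 - S^2) = 1/(β*J) := by
        have := pow_eq_zero_iff (n := 2) (by norm_num) |>.mp hsq0
        linarith
      have hS2eq : 1 - S^2 = 1/(β^2*J^2) := by
        have := congrArg (·^2) heq
        rw [hu] at this
        rw [this]; field_simp
      have : S^2 = (sfrak β J)^2 := by rw [hsq]; linarith
      have hfac : (S - sfrak β J) * (S + sfrak β J) = 0 := by nlinarith
      rcases mul_eq_zero.mp hfac with h' | h'
      · left; linarith
      · right; linarith
    · intro hS'
      have hS2eq : S^2 = 1 - 1/(β^2*J^2) := by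
        rcases hS' with h' | h' <;> rw [h'] <;> simp [hsq, neg_pow]
      have : Real.sqrt (1 - S^2) = 1/(β*J) := by
        rw [hS2eq]
        have : (1:ℝ) - (1 - 1/(β^2*J^2)) = (1/(β*J))^2 := by field_simp; ring
        rw [this, Real.sqrt_sq hc.le]
      rw [this]
      simp
end

section
/- For βĴ > 1, the potential W_β(S) = -(1/β)√(1-S²) - (1/2)ĴS² - Λ has exactly three critical points in (-1,1), namely 0, 𝔰, and -𝔰; its second derivative at 0 equals 1/β - Ĵ < 0, so 0 is a nondegenerate local maximum, and ±𝔰 are local minima. -/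
open Real Set

lemma hasDerivAt_Wbeta (β J S : ℝ) (hβ : 0 < β) (hS : S ∈ Set.Ioo (-1:ℝ) 1) :
    HasDerivAt (Wbeta β J) (S * (1/(β * Real.sqrt (1 - S^2)) - J)) S := by
  have h0 : (0:ℝ) < 1 - S^2 := by nlinarith [hS.1, hS.2]
  have hr : 0 < Real.sqrt (1 - S^2) := Real.sqrt_pos.mpr h0
  have h1 : HasDerivAt (fun S : ℝ => 1 - S^2) (-(2*S)) S := by
    simpa using ((hasDerivAt_pow 2 S).const_sub 1)
  have hsq : HasDerivAt (fun S : ℝ => Real.sqrt (1 - S^2))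
      (1 / (2 * Real.sqrt (1 - S^2)) * (-(2*S))) S :=
    (Real.hasDerivAt_sqrt (ne_of_gt h0)).comp S h1
  have hW : HasDerivAt (Wbeta β J)
      (-(1/β) * (1 / (2 * Real.sqrt (1 - S^2)) * (-(2*S))) - (1/2) * J * (2 * S^1) - 0) S := by
    exact ((hsq.const_mul (-(1/β))).sub (((hasDerivAt_pow 2 S).const_mul ((1/2)*J)))).sub
      (hasDerivAt_const S _)
  convert hW using 1
  field_simp
  ring

set_option maxHeartbeats 1600000 in
theorem double_well_critical_points (β J : ℝ) (hβ : 0 < β) (hJ : 0 < J) (h : 1 < β * J) :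
    (∀ S ∈ Set.Ioo (-1:ℝ) 1,
      (deriv (Wbeta β J) S = 0 ↔ S = 0 ∨ S = sfrak β J ∨ S = -sfrak β J)) ∧
    deriv (deriv (Wbeta β J)) 0 = 1/β - J ∧
    1/β - J < 0 ∧
    IsLocalMax (Wbeta β J) 0 ∧
    IsLocalMin (Wbeta β J) (sfrak β J) ∧
    IsLocalMin (Wbeta β J) (-(sfrak β J)) := by
  have hβJ : 0 < β * J := mul_pos hβ hJ
  have hb2 : (0:ℝ) < β^2 * J^2 := by positivity
  have hb2gt : (1:ℝ) < β^2 * J^2 := by nlinarith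
  have hinv_lt : 1/(β^2*J^2) < 1 := by
    rw [div_lt_one hb2]; exact hb2gt
  have hinv_pos : (0:ℝ) < 1/(β^2*J^2) := by positivity
  have hs_sq : (sfrak β J)^2 = 1 - 1/(β^2*J^2) := Real.sq_sqrt (by linarith)
  have hs_pos : 0 < sfrak β J := Real.sqrt_pos.mpr (by linarith)
  have hs_lt1 : sfrak β J < 1 := by
    rw [show (1:ℝ) = Real.sqrt 1 by simp [Real.sqrt_one]]
    exact Real.sqrt_lt_sqrt (by linarith) (by linarith)
  -- derivative formula on Ioo
  have hderiv : ∀ S ∈ Set.Ioo (-1:ℝ) 1,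
      deriv (Wbeta β J) S = S * (1/(β * Real.sqrt (1 - S^2)) - J) := fun S hS =>
    (hasDerivAt_Wbeta β J S hβ hS).deriv
  -- sign facts about the factor
  have hfac_neg : ∀ S : ℝ, S^2 < (sfrak β J)^2 →
      1/(β * Real.sqrt (1 - S^2)) - J < 0 := by
    intro S hS
    have h0 : (0:ℝ) < 1 - S^2 := by nlinarith
    have hr : 0 < Real.sqrt (1 - S^2) := Real.sqrt_pos.mpr h0
    have hr2 : (Real.sqrt (1 - S^2))^2 = 1 - S^2 := Real.sq_sqrt (le_of_lt h0)
    have ha2 : (1/(β*J))^2 = 1/(β^2*J^2) := by rw [div_pow, one_pow, mul_pow]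
    have hgt : (1/(β*J))^2 < (Real.sqrt (1 - S^2))^2 := by rw [hr2, ha2]; nlinarith [hs_sq]
    have hrgt : 1/(β*J) < Real.sqrt (1 - S^2) :=
      lt_of_pow_lt_pow_left₀ 2 hr.le hgt
    have : 1/(β * Real.sqrt (1 - S^2)) < J := by
      rw [div_lt_iff₀ (by positivity)]
      have := (div_lt_iff₀ hβJ).mp hrgt
      nlinarith
    linarith
  have hfac_pos : ∀ S : ℝ, (sfrak β J)^2 < S^2 → S^2 < 1 →
      0 < 1/(β * Real.sqrt (1 - S^2)) - J := by
    intro S hS hS1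
    have h0 : (0:ℝ) < 1 - S^2 := by linarith
    have hr : 0 < Real.sqrt (1 - S^2) := Real.sqrt_pos.mpr h0
    have hr2 : (Real.sqrt (1 - S^2))^2 = 1 - S^2 := Real.sq_sqrt (le_of_lt h0)
    have ha2 : (1/(β*J))^2 = 1/(β^2*J^2) := by rw [div_pow, one_pow, mul_pow]
    have hlt : (Real.sqrt (1 - S^2))^2 < (1/(β*J))^2 := by rw [hr2, ha2]; nlinarith [hs_sq]
    have hrlt : Real.sqrt (1 - S^2) < 1/(β*J) :=
      lt_of_pow_lt_pow_left₀ 2 (by positivity) hlt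
    have : J < 1/(β * Real.sqrt (1 - S^2)) := by
      rw [lt_div_iff₀ (by positivity)]
      have := (lt_div_iff₀ hβJ).mp hrlt
      nlinarith
    linarith
  have hfac_zero : ∀ S : ℝ, S^2 < 1 →
      (1/(β * Real.sqrt (1 - S^2)) - J = 0 ↔ S^2 = (sfrak β J)^2) := by
    intro S hS1
    have h0 : (0:ℝ) < 1 - S^2 := by linarith
    have hr : 0 < Real.sqrt (1 - S^2) := Real.sqrt_pos.mpr h0
    have hr2 : (Real.sqrt (1 - S^2))^2 = 1 - S^2 := Real.sq_sqrt (le_of_lt h0)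
    constructor
    · intro hF
      rcases lt_trichotomy (S^2) ((sfrak β J)^2) with hc | hc | hc
      · exact absurd hF (ne_of_lt (hfac_neg S hc))
      · exact hc
      · exact absurd hF (ne_of_gt (hfac_pos S hc hS1))
    · intro hE
      have hreq : Real.sqrt (1 - S^2) = 1/(β*J) := by
        have ha2 : (1/(β*J))^2 = 1/(β^2*J^2) := by rw [div_pow, one_pow, mul_pow]
        have h1 : (Real.sqrt (1 - S^2))^2 = (1/(β*J))^2 := by
          rw [hr2, hE, hs_sq, ha2]; ring
        have h2 : (Real.sqrt (1 - S^2) - 1/(β*J)) * (Real.sqrt (1 - S^2) + 1/(β*J)) = 0 := by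
          linear_combination h1
        rcases mul_eq_zero.mp h2 with h3 | h3
        · linarith
        · have : (0:ℝ) < 1/(β*J) := by positivity
          linarith
      rw [hreq]
      rw [sub_eq_zero]
      rw [one_div, one_div, mul_inv, inv_inv, inv_mul_cancel_left₀ (ne_of_gt hβ)]
  refine ⟨?_, ?_, ?_, ?_, ?_, ?_⟩
  · -- critical points
    intro S hS
    rw [hderiv S hS]
    rw [mul_eq_zero]
    have hS1 : S^2 < 1 := by nlinarith [hS.1, hS.2]
    constructor
    · rintro (h0 | hF)
      · exact Or.inl h0
      · have := (hfac_zero S hS1).mp hF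
        have h2 : (S - sfrak β J) * (S + sfrak β J) = 0 := by nlinarith
        rcases mul_eq_zero.mp h2 with h3 | h3
        · exact Or.inr (Or.inl (by linarith))
        · exact Or.inr (Or.inr (by linarith))
    · rintro (h0 | h0 | h0)
      · exact Or.inl h0
      · exact Or.inr ((hfac_zero S hS1).mpr (by rw [h0]))
      · exact Or.inr ((hfac_zero S hS1).mpr (by rw [h0]; ring))
  · -- second derivative at 0
    have hEq : deriv (Wbeta β J) =ᶠ[nhds (0:ℝ)]
        (fun S => S * (1/(β * Real.sqrt (1 - S^2)) - J)) := by
      filter_upwards [Ioo_mem_nhds (by norm_num : (-1:ℝ) < 0) (by norm_num : (0:ℝ) < 1)]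
        with S hS using hderiv S hS
    rw [Filter.EventuallyEq.deriv_eq hEq]
    have hg : HasDerivAt (fun S : ℝ => S * (1/(β * Real.sqrt (1 - S^2)) - J)) (1/β - J) 0 := by
      have h1 : HasDerivAt (fun S : ℝ => 1 - S^2) (-(2*(0:ℝ))) 0 := by
        simpa using ((hasDerivAt_pow 2 (0:ℝ)).const_sub 1)
      have hsq : HasDerivAt (fun S : ℝ => Real.sqrt (1 - S^2))
          (1 / (2 * Real.sqrt (1 - (0:ℝ)^2)) * (-(2*(0:ℝ)))) 0 :=
        (Real.hasDerivAt_sqrt (by norm_num)).comp 0 h1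
      have hsq0 : HasDerivAt (fun S : ℝ => Real.sqrt (1 - S^2)) 0 0 := by
        convert hsq using 1; norm_num
      have hden : HasDerivAt (fun S : ℝ => β * Real.sqrt (1 - S^2)) (β * 0) 0 :=
        hsq0.const_mul β
      have hne : β * Real.sqrt (1 - (0:ℝ)^2) ≠ 0 := by
        simp only [ne_eq, mul_eq_zero, not_or]
        constructor
        · exact ne_of_gt hβ
        · norm_num
      have hinv : HasDerivAt (fun S : ℝ => (β * Real.sqrt (1 - S^2))⁻¹)
          (-(β*0)/(β * Real.sqrt (1-(0:ℝ)^2))^2) 0 := hden.inv hne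
      have hinv0 : HasDerivAt (fun S : ℝ => (β * Real.sqrt (1 - S^2))⁻¹) 0 0 := by
        convert hinv using 1; norm_num
      have hF : HasDerivAt (fun S : ℝ => 1/(β * Real.sqrt (1 - S^2)) - J) 0 0 := by
        simpa [one_div] using hinv0.sub_const J
      have hmul : HasDerivAt (fun S : ℝ => S * (1/(β * Real.sqrt (1 - S^2)) - J))
          (1 * (1/(β * Real.sqrt (1 - (0:ℝ)^2)) - J) + (0:ℝ) * 0) 0 := (hasDerivAt_id' (0:ℝ)).fun_mul hF
      convert hmul using 1
      norm_num [Real.sqrt_one]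
    exact hg.deriv
  · -- 1/β - J < 0
    have : 1/β < J := by rw [div_lt_iff₀ hβ]; linarith [mul_comm β J ▸ h]
    linarith
  · -- local max at 0
    refine isLocalMax_of_deriv_Ioo (a := -(sfrak β J)) (c := sfrak β J)
      (by linarith) hs_pos ?_ ?_ ?_ ?_ ?_
    · exact (hasDerivAt_Wbeta β J 0 hβ ⟨by norm_num, by norm_num⟩).continuousAt
    · intro x hx
      exact (hasDerivAt_Wbeta β J x hβ ⟨by linarith [hx.1], by linarith [hx.2]⟩).differentiableAt.differentiableWithinAt
    · intro x hx
      exact (hasDerivAt_Wbeta β J x hβ ⟨by linarith [hx.1], by linarith [hx.2]⟩).differentiableAt.differentiableWithinAt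
    · intro x hx
      rw [hderiv x ⟨by linarith [hx.1], by linarith [hx.2]⟩]
      have hx2 : x^2 < (sfrak β J)^2 := by nlinarith [hx.1, hx.2]
      have := hfac_neg x hx2
      nlinarith [hx.2]
    · intro x hx
      rw [hderiv x ⟨by linarith [hx.1], by linarith [hx.2]⟩]
      have hx2 : x^2 < (sfrak β J)^2 := by nlinarith [hx.1, hx.2]
      have := hfac_neg x hx2
      nlinarith [hx.1]
  · -- local min at sfrak
    refine isLocalMin_of_deriv_Ioo (a := 0) (c := 1) hs_pos hs_lt1 ?_ ?_ ?_ ?_ ?_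
    · exact (hasDerivAt_Wbeta β J _ hβ ⟨by linarith, hs_lt1⟩).continuousAt
    · intro x hx
      exact (hasDerivAt_Wbeta β J x hβ ⟨by linarith [hx.1], by linarith [hx.2]⟩).differentiableAt.differentiableWithinAt
    · intro x hx
      exact (hasDerivAt_Wbeta β J x hβ ⟨by linarith [hx.1], hx.2⟩).differentiableAt.differentiableWithinAt
    · intro x hx
      rw [hderiv x ⟨by linarith [hx.1], by linarith [hx.2]⟩]
      have hx2 : x^2 < (sfrak β J)^2 := by nlinarith [hx.1, hx.2]
      have := hfac_neg x hx2
      nlinarith [hx.1]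
    · intro x hx
      rw [hderiv x ⟨by linarith [hx.1], hx.2⟩]
      have hx2 : (sfrak β J)^2 < x^2 := by nlinarith [hx.1, hx.2]
      have := hfac_pos x hx2 (by nlinarith [hx.1, hx.2])
      nlinarith [hx.1]
  · -- local min at -sfrak
    refine isLocalMin_of_deriv_Ioo (a := -1) (c := 0) (by linarith) (by linarith) ?_ ?_ ?_ ?_ ?_
    · exact (hasDerivAt_Wbeta β J _ hβ ⟨by linarith, by linarith⟩).continuousAt
    · intro x hx
      exact (hasDerivAt_Wbeta β J x hβ ⟨hx.1, by linarith [hx.2]⟩).differentiableAt.differentiableWithinAt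
    · intro x hx
      exact (hasDerivAt_Wbeta β J x hβ ⟨by linarith [hx.1], by linarith [hx.2]⟩).differentiableAt.differentiableWithinAt
    · intro x hx
      rw [hderiv x ⟨hx.1, by linarith [hx.2]⟩]
      have hx2 : (sfrak β J)^2 < x^2 := by nlinarith [hx.1, hx.2]
      have := hfac_pos x hx2 (by nlinarith [hx.1, hx.2])
      nlinarith [hx.2]
    · intro x hx
      rw [hderiv x ⟨by linarith [hx.1], by linarith [hx.2]⟩]
      have hx2 : x^2 < (sfrak β J)^2 := by nlinarith [hx.1, hx.2]
      have := hfac_neg x hx2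
      nlinarith [hx.2]
end

section
/- (Symmetric-decreasing comparison for the nonlocal interaction) Let J : ℝᵈ → ℝ be nonnegative integrable, s : 𝕋ᵈ → ℝ bounded measurable, 𝔰 > 0, and set s⁻ = min(s,𝔰), s⁺ = max(s,𝔰). Then pointwise s⁻ + s⁺ = s + 𝔰, and for every z, s(z)(J*s)(z) ≤ s⁻(z)(J*s⁻)(z) + s⁺(z)(J*s⁺)(z) - Ĵ𝔰², where Ĵ = ∫J. -/
open Real Set MeasureTheory

lemma trunc_aux (a b c : ℝ) : a * b + c ^ 2 ≤ min a c * min b c + max a c * max b c := by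
  rcases le_total a c with h | h <;> rcases le_total b c with h' | h' <;>
    simp [min_eq_left, min_eq_right, max_eq_left, max_eq_right, h, h'] <;> nlinarith

theorem truncation_interaction_comparison (d : ℕ)
    (J : (Fin d → ℝ) → ℝ) (s : (Fin d → ℝ) → ℝ) (sf : ℝ)
    (hJ0 : ∀ x, 0 ≤ J x) (hJint : Integrable J)
    (hs_meas : Measurable s) (hs_bdd : ∃ M, ∀ z, |s z| ≤ M)
    (hper : ∀ (z : Fin d → ℝ) (k : Fin d → ℤ), s (z + fun i => (k i : ℝ)) = s z)
    (hsf : 0 < sf) :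
    (∀ z, min (s z) sf + max (s z) sf = s z + sf) ∧
    (∀ z, s z * (∫ y, J (z - y) * s y)
        ≤ min (s z) sf * (∫ y, J (z - y) * min (s y) sf)
          + max (s z) sf * (∫ y, J (z - y) * max (s y) sf)
          - (∫ x, J x) * sf^2) := by
  obtain ⟨M, hM⟩ := hs_bdd
  refine ⟨fun z => min_add_max _ _, fun z => ?_⟩
  have hJz : Integrable (fun y => J (z - y)) := hJint.comp_sub_left z
  have key : ∀ (u : (Fin d → ℝ) → ℝ) (C : ℝ), Measurable u → (∀ y, |u y| ≤ C) →
      Integrable fun y => J (z - y) * u y := by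
    intro u C hu hC
    have := hJz.bdd_mul hu.aestronglyMeasurable
      (c := C) (Filter.Eventually.of_forall fun y => by simpa [Real.norm_eq_abs] using hC y)
    simpa [mul_comm] using this
  have h1 : Integrable fun y => J (z - y) * s y := key s M hs_meas hM
  have h2 : Integrable fun y => J (z - y) * min (s y) sf :=
    key _ (max M sf) (hs_meas.min measurable_const)
      (fun y => abs_min_le_max_abs_abs.trans
        (max_le_max (hM y) (le_of_eq (abs_of_pos hsf))))
  have h3 : Integrable fun y => J (z - y) * max (s y) sf :=
    key _ (max M sf) (hs_meas.max measurable_const)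
      (fun y => abs_max_le_max_abs_abs.trans
        (max_le_max (hM y) (le_of_eq (abs_of_pos hsf))))
  have hJeq : (∫ y, J (z - y)) = ∫ x, J x := integral_sub_left_eq_self J volume z
  calc s z * (∫ y, J (z - y) * s y)
      = ∫ y, s z * (J (z - y) * s y) := (integral_const_mul _ _).symm
    _ ≤ ∫ y, (min (s z) sf * (J (z - y) * min (s y) sf)
          + max (s z) sf * (J (z - y) * max (s y) sf) - J (z - y) * sf ^ 2) := by
        refine integral_mono (h1.const_mul _)
          (((h2.const_mul _).add (h3.const_mul _)).sub (hJz.mul_const _)) (fun y => ?_)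
        have h := trunc_aux (s z) (s y) sf
        have hj := hJ0 (z - y)
        nlinarith [mul_le_mul_of_nonneg_left h hj]
    _ = _ := by
        have hA := h2.const_mul (min (s z) sf)
        have hB := h3.const_mul (max (s z) sf)
        have hC := hJz.mul_const (sf ^ 2)
        have hAB : Integrable (fun y => min (s z) sf * (J (z - y) * min (s y) sf)
            + max (s z) sf * (J (z - y) * max (s y) sf)) := hA.add hB
        rw [integral_sub hAB hC, integral_add hA hB, integral_const_mul, integral_const_mul,
          integral_mul_const, hJeq]
end
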